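/- arXiv:2005.13608 — 2 statements merged into one kernel-verified Lean document; each statement's English description precedes it below -/
import Mathlib

section
/- For any graphs G and H without isolated vertices, each of order at least three, γ_tR(G × H) ≥ max{ρ_o(H)·γ_tR(G)/2, ρ_o(G)·γ_tR(H)/2}, where ρ_o denotes the open packing number. -/
open Finset

/-- A total Roman dominating function: labels in {0,1,2}, every 0-labeled vertex has a
2-labeled neighbor, and positive-labeled vertices induce a subgraph with no isolated vertex. -/
def IsTRDF {V : Type*} (G : SimpleGraph V) (f : V → ℕ) : Prop :=
  (∀ v, f v ≤ 2) ∧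
  (∀ v, f v = 0 → ∃ u, G.Adj v u ∧ f u = 2) ∧
  (∀ v, 0 < f v → ∃ u, G.Adj v u ∧ 0 < f u)

/-- The total Roman domination number. -/
noncomputable def trdn {V : Type*} (G : SimpleGraph V) [Fintype V] : ℕ :=
  sInf {w | ∃ f : V → ℕ, IsTRDF G f ∧ ∑ v, f v = w}

/-- A total dominating set. -/
def IsTotalDomSet {V : Type*} (G : SimpleGraph V) (D : Set V) : Prop :=
  ∀ v, ∃ u ∈ D, G.Adj v u

/-- The total domination number. -/
noncomputable def tdn {V : Type*} (G : SimpleGraph V) [Fintype V] : ℕ :=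
  sInf {n | ∃ D : Finset V, IsTotalDomSet G ↑D ∧ D.card = n}

/-- A packing: pairwise disjoint closed neighborhoods. -/
def IsPacking {V : Type*} (G : SimpleGraph V) (S : Set V) : Prop :=
  ∀ u ∈ S, ∀ v ∈ S, u ≠ v →
    Disjoint (insert u (G.neighborSet u)) (insert v (G.neighborSet v))

/-- The packing number. -/
noncomputable def packingNumber {V : Type*} (G : SimpleGraph V) [Fintype V] : ℕ :=
  sSup {n | ∃ S : Finset V, IsPacking G ↑S ∧ S.card = n}

/-- An open packing: pairwise disjoint open neighborhoods. -/
def IsOpenPacking {V : Type*} (G : SimpleGraph V) (S : Set V) : Prop :=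
  ∀ u ∈ S, ∀ v ∈ S, u ≠ v → Disjoint (G.neighborSet u) (G.neighborSet v)

/-- The open packing number. -/
noncomputable def openPackingNumber {V : Type*} (G : SimpleGraph V) [Fintype V] : ℕ :=
  sSup {n | ∃ S : Finset V, IsOpenPacking G ↑S ∧ S.card = n}

/-- The direct (tensor) product of two simple graphs. -/
def dirProd {V W : Type*} (G : SimpleGraph V) (H : SimpleGraph W) : SimpleGraph (V × W) where
  Adj p q := G.Adj p.1 q.1 ∧ H.Adj p.2 q.2
  symm := ⟨fun p q h => ⟨h.1.symm, h.2.symm⟩⟩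
  loopless := ⟨fun p h => G.loopless.irrefl p.1 h.1⟩

/-- A graph with no isolated vertices. -/
def NoIsolated {V : Type*} (G : SimpleGraph V) : Prop := ∀ v, ∃ u, G.Adj v u

/-!
The positive support of a total Roman dominating function is a total dominating set, and labelling
a total dominating set by 2 gives a total Roman dominating function, so γ_t ≤ γ_tR ≤ 2γ_t.
It thus suffices to show ρ_o(H)·γ_t(G) ≤ γ_t(G × H). Given a total dominating set D of G × H and an
open packing S of H, for each h ∈ S the vertices of D whose second coordinate is adjacent to h
project onto a total dominating set of G (they dominate the fibre G × {h}), and these parts of D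
are disjoint because the neighbourhoods of the vertices of S are.
-/

section

variable {V W : Type*}

theorem NoIsolated.dirProd {G : SimpleGraph V} {H : SimpleGraph W}
    (hG : NoIsolated G) (hH : NoIsolated H) : NoIsolated (dirProd G H) := by
  rintro ⟨g, h⟩
  obtain ⟨g', hg'⟩ := hG g
  obtain ⟨h', hh'⟩ := hH h
  exact ⟨(g', h'), hg', hh'⟩

def dirProdComm (G : SimpleGraph V) (H : SimpleGraph W) : dirProd G H ≃g dirProd H G where
  toEquiv := Equiv.prodComm V W
  map_rel_iff' := And.comm

theorem IsTotalDomSet.image_iso {V' : Type*} {G : SimpleGraph V} {G' : SimpleGraph V'}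
    (e : G ≃g G') {D : Set V} (hD : IsTotalDomSet G D) : IsTotalDomSet G' (e '' D) := by
  intro v'
  obtain ⟨u, hu, hadj⟩ := hD (e.symm v')
  exact ⟨e u, Set.mem_image_of_mem e hu, by simpa using e.map_adj_iff.mpr hadj⟩

theorem IsTotalDomSet.image_fst_filter_adj {G : SimpleGraph V} {H : SimpleGraph W}
    [DecidableEq V] [DecidableRel H.Adj] {D : Finset (V × W)}
    (hD : IsTotalDomSet (dirProd G H) ↑D) (h : W) :
    IsTotalDomSet G ↑((D.filter fun p : V × W => H.Adj h p.2).image Prod.fst) := by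
  intro g
  obtain ⟨p, hpD, hadj⟩ := hD (g, h)
  exact ⟨p.1, by simpa using ⟨p.2, hpD, hadj.2⟩, hadj.1⟩

theorem IsTRDF.isTotalDomSet_support {G : SimpleGraph V} {f : V → ℕ} (hf : IsTRDF G f) :
    IsTotalDomSet G {v | 0 < f v} := by
  intro v
  rcases Nat.eq_zero_or_pos (f v) with hv | hv
  · obtain ⟨u, hadj, hu⟩ := hf.2.1 v hv
    exact ⟨u, by simp [hu], hadj⟩
  · obtain ⟨u, hadj, hu⟩ := hf.2.2 v hv
    exact ⟨u, hu, hadj⟩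

theorem IsTotalDomSet.isTRDF_two_indicator {G : SimpleGraph V} {D : Set V}
    [DecidablePred (· ∈ D)] (hD : IsTotalDomSet G D) :
    IsTRDF G fun v => if v ∈ D then 2 else 0 := by
  have dominated (v : V) : ∃ u, G.Adj v u ∧ (if u ∈ D then 2 else 0) = 2 := by
    obtain ⟨u, hu, hadj⟩ := hD v
    exact ⟨u, hadj, if_pos hu⟩
  refine ⟨fun v => by dsimp only; split <;> omega, fun v _ => dominated v, fun v _ => ?_⟩
  obtain ⟨u, hadj, hu⟩ := dominated v
  exact ⟨u, hadj, by dsimp only; omega⟩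

section Fintype

variable [Fintype V] [Fintype W]

theorem tdn_le_card {G : SimpleGraph V} {D : Finset V} (hD : IsTotalDomSet G ↑D) :
    tdn G ≤ D.card :=
  Nat.sInf_le ⟨D, hD, rfl⟩

theorem NoIsolated.exists_isTotalDomSet_card_eq_tdn {G : SimpleGraph V} (hG : NoIsolated G) :
    ∃ D : Finset V, IsTotalDomSet G ↑D ∧ D.card = tdn G :=
  Nat.sInf_mem (s := {n | ∃ D : Finset V, IsTotalDomSet G ↑D ∧ D.card = n})
    ⟨_, univ, fun v => (hG v).imp fun u hu => ⟨mem_univ u, hu⟩, rfl⟩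

theorem tdn_le_of_iso {V' : Type*} [Fintype V'] {G : SimpleGraph V} {G' : SimpleGraph V'}
    (e : G ≃g G') (hG : NoIsolated G) : tdn G' ≤ tdn G := by
  classical
  obtain ⟨D, hD, hcard⟩ := hG.exists_isTotalDomSet_card_eq_tdn
  calc tdn G' ≤ (D.image e).card := tdn_le_card (by simpa using hD.image_iso e)
    _ = tdn G := by rw [card_image_of_injective D e.injective, hcard]

theorem trdn_le_sum {G : SimpleGraph V} {f : V → ℕ} (hf : IsTRDF G f) : trdn G ≤ ∑ v, f v :=
  Nat.sInf_le ⟨f, hf, rfl⟩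

theorem NoIsolated.exists_isTRDF_sum_eq_trdn {G : SimpleGraph V} (hG : NoIsolated G) :
    ∃ f : V → ℕ, IsTRDF G f ∧ ∑ v, f v = trdn G := by
  have hconst : IsTRDF G fun _ => 2 :=
    ⟨fun _ => le_rfl, fun _ h => absurd h two_ne_zero,
      fun v _ => (hG v).imp fun _ hu => ⟨hu, two_pos⟩⟩
  exact Nat.sInf_mem (s := {w | ∃ f : V → ℕ, IsTRDF G f ∧ ∑ v, f v = w})
    ⟨_, _, hconst, rfl⟩

theorem exists_isOpenPacking_card_eq_openPackingNumber (G : SimpleGraph V) :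
    ∃ S : Finset V, IsOpenPacking G ↑S ∧ S.card = openPackingNumber G := by
  have hbdd : BddAbove {n | ∃ S : Finset V, IsOpenPacking G ↑S ∧ S.card = n} := by
    refine ⟨Fintype.card V, ?_⟩
    rintro n ⟨S, -, rfl⟩
    exact S.card_le_univ
  exact Nat.sSup_mem (s := {n | ∃ S : Finset V, IsOpenPacking G ↑S ∧ S.card = n})
    ⟨0, ∅, by simp [IsOpenPacking], rfl⟩ hbdd

theorem tdn_le_trdn {G : SimpleGraph V} (hG : NoIsolated G) : tdn G ≤ trdn G := by
  classical
  obtain ⟨f, hf, hsum⟩ := hG.exists_isTRDF_sum_eq_trdn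
  calc tdn G ≤ (univ.filter fun v => 0 < f v).card :=
        tdn_le_card (by simpa using hf.isTotalDomSet_support)
    _ = ∑ v ∈ univ.filter (fun v => 0 < f v), 1 := card_eq_sum_ones _
    _ ≤ ∑ v ∈ univ.filter (fun v => 0 < f v), f v := sum_le_sum fun v hv => (mem_filter.mp hv).2
    _ ≤ ∑ v, f v := sum_le_sum_of_subset (subset_univ _)
    _ = trdn G := hsum

theorem trdn_le_two_mul_tdn {G : SimpleGraph V} (hG : NoIsolated G) : trdn G ≤ 2 * tdn G := by
  classical
  obtain ⟨D, hD, hcard⟩ := hG.exists_isTotalDomSet_card_eq_tdn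
  calc trdn G ≤ ∑ v, if v ∈ D then 2 else 0 := trdn_le_sum hD.isTRDF_two_indicator
    _ = 2 * tdn G := by rw [sum_ite_mem, univ_inter, sum_const, smul_eq_mul, hcard, mul_comm]

theorem openPackingNumber_mul_tdn_le_tdn_dirProd {G : SimpleGraph V} {H : SimpleGraph W}
    (hG : NoIsolated G) (hH : NoIsolated H) :
    openPackingNumber H * tdn G ≤ tdn (dirProd G H) := by
  classical
  obtain ⟨S, hS, hScard⟩ := exists_isOpenPacking_card_eq_openPackingNumber H
  obtain ⟨D, hD, hDcard⟩ := (hG.dirProd hH).exists_isTotalDomSet_card_eq_tdn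
  set part : W → Finset (V × W) := fun h => D.filter fun p => H.Adj h p.2
  have part_disjoint : (S : Set W).PairwiseDisjoint part := by
    intro h hh h' hh' hne
    refine disjoint_left.mpr fun p hp hp' => ?_
    exact Set.disjoint_left.mp (hS h hh h' hh' hne) (mem_filter.mp hp).2 (mem_filter.mp hp').2
  calc openPackingNumber H * tdn G = ∑ _h ∈ S, tdn G := by rw [sum_const, smul_eq_mul, hScard]
    _ ≤ ∑ h ∈ S, (part h).card :=
        sum_le_sum fun h _ => (tdn_le_card (hD.image_fst_filter_adj h)).trans card_image_le
    _ = (S.biUnion part).card := (card_biUnion part_disjoint).symm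
    _ ≤ D.card := card_le_card (biUnion_subset.mpr fun _ _ => filter_subset _ _)
    _ = tdn (dirProd G H) := hDcard

theorem openPackingNumber_mul_tdn_le_tdn_dirProd_left {G : SimpleGraph V} {H : SimpleGraph W}
    (hG : NoIsolated G) (hH : NoIsolated H) :
    openPackingNumber G * tdn H ≤ tdn (dirProd G H) :=
  (openPackingNumber_mul_tdn_le_tdn_dirProd hH hG).trans
    (tdn_le_of_iso (dirProdComm G H) (hG.dirProd hH))

theorem mul_trdn_div_two_le_trdn_of_mul_tdn_le {U : Type*} [Fintype U] {G : SimpleGraph V}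
    {P : SimpleGraph U} (hG : NoIsolated G) (hP : NoIsolated P) {k : ℕ}
    (hk : k * tdn G ≤ tdn P) : (k : ℝ) * trdn G / 2 ≤ trdn P := by
  have bound : k * trdn G ≤ trdn P * 2 :=
    calc k * trdn G ≤ k * (2 * tdn G) := Nat.mul_le_mul_left _ (trdn_le_two_mul_tdn hG)
      _ = k * tdn G * 2 := by ring
      _ ≤ trdn P * 2 := Nat.mul_le_mul_right _ (hk.trans (tdn_le_trdn hP))
  rw [div_le_iff₀ two_pos]
  exact_mod_cast bound

end Fintype

end

theorem stmt_9_general {V W : Type*} [Fintype V] [Fintype W]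
    (G : SimpleGraph V) (H : SimpleGraph W)
    (hG : NoIsolated G) (hH : NoIsolated H) :
    (trdn (dirProd G H) : ℝ) ≥
      max ((openPackingNumber H : ℝ) * trdn G / 2)
        ((openPackingNumber G : ℝ) * trdn H / 2) :=
  max_le
    (mul_trdn_div_two_le_trdn_of_mul_tdn_le hG (hG.dirProd hH)
      (openPackingNumber_mul_tdn_le_tdn_dirProd hG hH))
    (mul_trdn_div_two_le_trdn_of_mul_tdn_le hH (hG.dirProd hH)
      (openPackingNumber_mul_tdn_le_tdn_dirProd_left hG hH))

theorem stmt_9 {V W : Type*} [Fintype V] [Fintype W]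
    (G : SimpleGraph V) (H : SimpleGraph W)
    (hG : NoIsolated G) (hH : NoIsolated H)
    (hV : 3 ≤ Fintype.card V) (hW : 3 ≤ Fintype.card W) :
    (trdn (dirProd G H) : ℝ) ≥
      max ((openPackingNumber H : ℝ) * trdn G / 2)
        ((openPackingNumber G : ℝ) * trdn H / 2) :=
  stmt_9_general G H hG hH
end

section
/- If G and H are triangle centered graphs, then γ_tR(G × H) ≤ 6. -/
open Finset

/-- A graph is triangle centered if it has a triangle such that every vertex is
adjacent to at least two of its vertices. -/
def TriangleCentered {V : Type*} (G : SimpleGraph V) : Prop :=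
  ∃ x y z : V, G.Adj x y ∧ G.Adj y z ∧ G.Adj x z ∧
    ∀ v : V, (G.Adj v x ∧ G.Adj v y) ∨ (G.Adj v y ∧ G.Adj v z) ∨ (G.Adj v x ∧ G.Adj v z)

/-- A universal vertex is adjacent to all other vertices. -/
def IsUniversalVertex {V : Type*} (G : SimpleGraph V) (v : V) : Prop :=
  ∀ u, u ≠ v → G.Adj v u


/-! If every vertex of `G` sees two of `x, y, z` and every vertex of `H` sees two of `a, b, c`,
then a vertex `(v, w)` of `G × H` sees the `H`-vertices of some pair, say `a, b`, and `v` sees at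
least one of the matching pair `x, y`; so `{(x, a), (y, b), (z, c)}` totally dominates `G × H`.
Labelling a total dominating set `D` by `2` gives a total Roman dominating function of weight
`2 |D| ≤ 6`. -/

section TotalRoman

variable {V : Type*} {G : SimpleGraph V}

theorem IsTRDF.trdn_le [Fintype V] {f : V → ℕ} (hf : IsTRDF G f) : trdn G ≤ ∑ v, f v :=
  Nat.sInf_le ⟨f, hf, rfl⟩

theorem IsTotalDomSet.isTRDF_ite {D : Set V} [DecidablePred (· ∈ D)] (hD : IsTotalDomSet G D) :
    IsTRDF G (fun v => if v ∈ D then 2 else 0) := by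
  refine ⟨fun v => ?_, fun v _ => ?_, fun v _ => ?_⟩
  · dsimp only
    split_ifs <;> omega
  · obtain ⟨u, hu, hvu⟩ := hD v
    exact ⟨u, hvu, if_pos hu⟩
  · obtain ⟨u, hu, hvu⟩ := hD v
    exact ⟨u, hvu, by simp [hu]⟩

theorem trdn_le_two_mul_card [Fintype V] [DecidableEq V] {D : Finset V}
    (hD : IsTotalDomSet G ↑D) : trdn G ≤ 2 * D.card := by
  calc trdn G ≤ ∑ v, if v ∈ D then 2 else 0 := hD.isTRDF_ite.trdn_le
    _ = 2 * D.card := by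
      rw [sum_ite_mem, univ_inter, sum_const, smul_eq_mul, mul_comm]

end TotalRoman

section DirProd

variable {V W : Type*} {G : SimpleGraph V} {H : SimpleGraph W}

theorem isTotalDomSet_dirProd_of_adj_two_of_three {x y z : V} {a b c : W}
    (hG : ∀ v, (G.Adj v x ∧ G.Adj v y) ∨ (G.Adj v y ∧ G.Adj v z) ∨
      (G.Adj v x ∧ G.Adj v z))
    (hH : ∀ w, (H.Adj w a ∧ H.Adj w b) ∨ (H.Adj w b ∧ H.Adj w c) ∨
      (H.Adj w a ∧ H.Adj w c)) :
    IsTotalDomSet (dirProd G H) {(x, a), (y, b), (z, c)} := by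
  rintro ⟨v, w⟩
  rcases hH w with ⟨hwa, hwb⟩ | ⟨hwb, hwc⟩ | ⟨hwa, hwc⟩
  · obtain h | h : G.Adj v x ∨ G.Adj v y := by have := hG v; tauto
    exacts [⟨(x, a), by simp, h, hwa⟩, ⟨(y, b), by simp, h, hwb⟩]
  · obtain h | h : G.Adj v y ∨ G.Adj v z := by have := hG v; tauto
    exacts [⟨(y, b), by simp, h, hwb⟩, ⟨(z, c), by simp, h, hwc⟩]
  · obtain h | h : G.Adj v x ∨ G.Adj v z := by have := hG v; tauto
    exacts [⟨(x, a), by simp, h, hwa⟩, ⟨(z, c), by simp, h, hwc⟩]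

theorem TriangleCentered.exists_isTotalDomSet_dirProd (hG : TriangleCentered G)
    (hH : TriangleCentered H) :
    ∃ D : Finset (V × W), IsTotalDomSet (dirProd G H) ↑D ∧ D.card ≤ 3 := by
  classical
  obtain ⟨x, y, z, -, -, -, hGxyz⟩ := hG
  obtain ⟨a, b, c, -, -, -, hHabc⟩ := hH
  refine ⟨{(x, a), (y, b), (z, c)}, ?_, card_le_three⟩
  push_cast
  exact isTotalDomSet_dirProd_of_adj_two_of_three hGxyz hHabc

end DirProd

theorem stmt_14 {V W : Type*} [Fintype V] [Fintype W]
    (G : SimpleGraph V) (H : SimpleGraph W)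
    (hG : TriangleCentered G) (hH : TriangleCentered H) :
    trdn (dirProd G H) ≤ 6 := by
  classical
  obtain ⟨D, hD, hcard⟩ := hG.exists_isTotalDomSet_dirProd hH
  calc trdn (dirProd G H) ≤ 2 * D.card := trdn_le_two_mul_card hD
    _ ≤ 6 := by omega
end
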